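/- Assume the subsonic condition γρ*^{γ−1} > m*²/ρ*². Then the triplet (S(ξ), S(ξ)A(ξ), S(ξ)B(ξ)) is genuinely coupled: for every ξ ≠ 0, every nonzero vector V ∈ ℝ² with S(ξ)B(ξ)·V = 0, and every ϱ ∈ ℝ, one has (ϱ·S(ξ) + S(ξ)A(ξ))·V ≠ 0. -/
import Mathlib


/-- `α(ξ) = p'(ρ*) − m*²/ρ*² + (k²/2)ξ²` with `p(ρ) = ρ^γ`. -/
noncomputable def alphaSym (ρs ms k γ ξ : ℝ) : ℝ :=
  γ * ρs ^ (γ - 1) - ms ^ 2 / ρs ^ 2 + k ^ 2 / 2 * ξ ^ 2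

/-- Genuine coupling of the triplet `(S(ξ), S(ξ)A(ξ), S(ξ)B(ξ))` under the subsonic
condition: for every `ξ ≠ 0`, every nonzero `V ∈ ℝ²` in the kernel of
`S(ξ)B(ξ) = ξ²·diag(0,μ)`, and every `ϱ ∈ ℝ`, one has `(ϱS(ξ) + S(ξ)A(ξ))V ≠ 0`. -/
theorem subsonic_genuine_coupling
    (ρs ms μ k γ : ℝ) (hρ : 0 < ρs) (hμ : 0 < μ) (hk : 0 < k) (hγ : 1 < γ)
    (hsub : ms ^ 2 / ρs ^ 2 < γ * ρs ^ (γ - 1)) :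
    ∀ ξ : ℝ, ξ ≠ 0 → ∀ V : Fin 2 → ℝ, V ≠ 0 →
      (ξ ^ 2 • !![(0 : ℝ), 0; 0, μ]).mulVec V = 0 →
      ∀ ϱ : ℝ,
        (ϱ • (!![alphaSym ρs ms k γ ξ, 0; 0, 1] : Matrix (Fin 2) (Fin 2) ℝ)
          + !![0, alphaSym ρs ms k γ ξ; alphaSym ρs ms k γ ξ, 2 * ms / ρs]).mulVec V ≠ 0 := by
  intro ξ hξ V hV hker ϱ
  have hα : 0 < alphaSym ρs ms k γ ξ := by
    have h1 : 0 < k ^ 2 / 2 * ξ ^ 2 := by positivity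
    have h2 : 0 < γ * ρs ^ (γ - 1) - ms ^ 2 / ρs ^ 2 := by linarith
    unfold alphaSym; linarith
  have hV1 : V 1 = 0 := by
    have h := congrFun hker 1
    simp [Matrix.mulVec, dotProduct, Fin.sum_univ_two] at h
    rcases h with (h | h) | h
    · exact absurd h hξ
    · exact absurd h (ne_of_gt hμ)
    · exact h
  have hV0 : V 0 ≠ 0 := by
    intro h0
    apply hV
    funext i
    fin_cases i <;> simp [h0, hV1]
  intro hcontra
  have h := congrFun hcontra 1
  simp [Matrix.mulVec, dotProduct, Fin.sum_univ_two, hV1] at h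
  rcases h with h | h
  · exact absurd h (ne_of_gt hα)
  · exact hV0 h
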